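/- For every aggregated edge cost g : Y × Y → ℝ on a finite nonempty label set Y, the MPLP++ (handshake) update dominates the MPLP update componentwise: θ^H_u(s) ≥ θ^M_u(s) for all s ∈ Y and θ^H_v(t) ≥ θ^M_v(t) for all t ∈ Y. -/
import Mathlib

/-- Minimum of a real-valued function over a finite nonempty type. -/
noncomputable def fmin {Y : Type*} [Fintype Y] [Nonempty Y] (f : Y → ℝ) : ℝ :=
  Finset.univ.inf' Finset.univ_nonempty f

/-- MPLP update, unary at `u`: `θ^M_u(s) = (1/2)·min_t g(s,t)`. -/
noncomputable def thetaMu {Y : Type*} [Fintype Y] [Nonempty Y] (g : Y × Y → ℝ) (s : Y) : ℝ :=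
  (1 / 2) * fmin (fun t => g (s, t))

/-- MPLP update, unary at `v`: `θ^M_v(t) = (1/2)·min_s g(s,t)`. -/
noncomputable def thetaMv {Y : Type*} [Fintype Y] [Nonempty Y] (g : Y × Y → ℝ) (t : Y) : ℝ :=
  (1 / 2) * fmin (fun s => g (s, t))

/-- MPLP++ (handshake) update, unary at `v`: `θ^H_v(t) = min_s [g(s,t) − θ^M_u(s)]`. -/
noncomputable def thetaHv {Y : Type*} [Fintype Y] [Nonempty Y] (g : Y × Y → ℝ) (t : Y) : ℝ :=
  fmin (fun s => g (s, t) - thetaMu g s)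

/-- MPLP++ (handshake) update, unary at `u`: `θ^H_u(s) = min_t [g(s,t) − θ^H_v(t)]`. -/
noncomputable def thetaHu {Y : Type*} [Fintype Y] [Nonempty Y] (g : Y × Y → ℝ) (s : Y) : ℝ :=
  fmin (fun t => g (s, t) - thetaHv g t)

/-- Uniform update, unary at `u`: constant `(1/2)·min_{(s',t')} g(s',t')`. -/
noncomputable def thetaUu {Y : Type*} [Fintype Y] [Nonempty Y] (g : Y × Y → ℝ) (_ : Y) : ℝ :=
  (1 / 2) * fmin g

/-- Uniform update, unary at `v`: constant `(1/2)·min_{(s',t')} g(s',t')`. -/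
noncomputable def thetaUv {Y : Type*} [Fintype Y] [Nonempty Y] (g : Y × Y → ℝ) (_ : Y) : ℝ :=
  (1 / 2) * fmin g

lemma fmin_le {Y : Type*} [Fintype Y] [Nonempty Y] (f : Y → ℝ) (y : Y) : fmin f ≤ f y :=
  Finset.inf'_le _ (Finset.mem_univ y)

lemma le_fmin {Y : Type*} [Fintype Y] [Nonempty Y] {f : Y → ℝ} {c : ℝ}
    (h : ∀ y, c ≤ f y) : c ≤ fmin f :=
  Finset.le_inf' _ _ (fun y _ => h y)

/-- The MPLP++ (handshake) update dominates the MPLP update componentwise. -/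
theorem mplpp_dominates_mplp {Y : Type*} [Fintype Y] [Nonempty Y] (g : Y × Y → ℝ) :
    (∀ s : Y, thetaMu g s ≤ thetaHu g s) ∧ (∀ t : Y, thetaMv g t ≤ thetaHv g t) := by
  constructor
  · intro s
    apply le_fmin
    intro t
    have h : thetaHv g t ≤ g (s, t) - thetaMu g s := fmin_le _ s
    linarith
  · intro t
    apply le_fmin
    intro s
    have h1 : thetaMu g s ≤ (1 / 2) * g (s, t) := by
      have := fmin_le (fun t' => g (s, t')) t
      unfold thetaMu
      nlinarith [this]
    have h2 : thetaMv g t ≤ (1 / 2) * g (s, t) := by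
      have := fmin_le (fun s' => g (s', t)) s
      unfold thetaMv
      nlinarith [this]
    linarith
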